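/- Suppose ‖∇F(w_t)‖ ≤ G almost surely for all t, ‖κ‖ ≤ K, and the random matrix H_t satisfies ‖H_t‖ ≤ C almost surely. Define u_t = (κᵀ q_t) ∇F(w_t) - H_tᵀ q_t. If E[H_t | ℱ_t] = κ ∇F(w_t)ᵀ with q_t, w_t being ℱ_t-measurable, then E[u_t | ℱ_t] = 0 and E[‖u_t‖² | ℱ_t] ≤ M(1 + ‖q_t‖²) for some constant M depending only on G, K, C. -/

import Mathlib

/-!
Write `u = ∑ᵢ qᵢ • Vᵢ` with `Vᵢ = κᵢ ∇F(w) - Hᵢ`. Each `Vᵢ` is bounded with vanishing conditional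
expectation, and `u` is the image of the `𝒢`-measurable `q` and of `V` under a fixed bilinear map,
so the pull-out property gives `E[u | 𝒢] = 0` without any integrability of `q`. For the second
moment, `‖u‖² ≤ M (1 + ‖q‖²)`; pulling the `𝒢`-measurable factor `1 + ‖q‖²` out of
`‖u‖² = (1 + ‖q‖²) · (‖u‖² / (1 + ‖q‖²))` reduces the bound to one for a bounded function.
-/

open MeasureTheory
open scoped RealInnerProductSpace

section SumSmul

variable {ι E : Type*} [Fintype ι] [NormedAddCommGroup E] [NormedSpace ℝ E]

variable (ι E) in
noncomputable def sumSmulCLM : EuclideanSpace ℝ ι →L[ℝ] (ι → E) →L[ℝ] E :=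
  ∑ i, (ContinuousLinearMap.lsmul ℝ ℝ).bilinearComp (EuclideanSpace.proj i)
    (ContinuousLinearMap.proj i)

@[simp]
theorem sumSmulCLM_apply (x : EuclideanSpace ℝ ι) (v : ι → E) :
    sumSmulCLM ι E x v = ∑ i, x i • v i := by
  simp [sumSmulCLM]

theorem norm_sum_smul_le (x : EuclideanSpace ℝ ι) {v : ι → E} {C : ℝ} (hv : ∀ i, ‖v i‖ ≤ C) :
    ‖∑ i, x i • v i‖ ≤ Fintype.card ι * (‖x‖ * C) :=
  calc ‖∑ i, x i • v i‖ ≤ ∑ i, ‖x i • v i‖ := norm_sum_le _ _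
    _ ≤ ∑ _i : ι, ‖x‖ * C := Finset.sum_le_sum fun i _ => by
        rw [norm_smul]
        exact mul_le_mul (PiLp.norm_apply_le x i) (hv i) (norm_nonneg _) (norm_nonneg _)
    _ = Fintype.card ι * (‖x‖ * C) := by simp

theorem inner_smul_sub_sum_smul (κ x : EuclideanSpace ℝ ι) (g : E) (h : ι → E) :
    ⟪κ, x⟫ • g - ∑ i, x i • h i = ∑ i, x i • (κ i • g - h i) := by
  simp only [PiLp.inner_apply, RCLike.inner_apply, conj_trivial, Finset.sum_smul, smul_sub,
    smul_smul, mul_comm, Finset.sum_sub_distrib]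

end SumSmul

section CondExp

variable {Ω E : Type*} {m m0 : MeasurableSpace Ω} {μ : Measure Ω}
  [NormedAddCommGroup E] [NormedSpace ℝ E] [CompleteSpace E]

theorem condExp_sub_ae_eq_zero_of_condExp_ae_eq [IsFiniteMeasure μ] (hm : m ≤ m0) {X Y : Ω → E}
    (hX : Integrable X μ) (hY_meas : StronglyMeasurable[m] Y) (hY : Integrable Y μ)
    (hXY : μ[X | m] =ᵐ[μ] Y) :
    μ[fun ω => Y ω - X ω | m] =ᵐ[μ] 0 := by
  filter_upwards [condExp_sub hY hX m, hXY] with ω hsub hX'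
  rw [show (fun ω => Y ω - X ω) = Y - X from rfl, hsub, Pi.sub_apply,
    condExp_of_stronglyMeasurable hm hY_meas hY, hX', sub_self, Pi.zero_apply]

theorem condExp_pi_ae_eq_zero {ι : Type*} [Fintype ι] {V : Ω → ι → E}
    (hV : ∀ i, Integrable (fun ω => V ω i) μ) (hV0 : ∀ i, μ[fun ω => V ω i | m] =ᵐ[μ] 0) :
    μ[V | m] =ᵐ[μ] 0 := by
  have hcomm i := (ContinuousLinearMap.proj (R := ℝ) (φ := fun _ : ι => E) i).comp_condExp_comm
    (m := m) (Integrable.of_eval hV)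
  filter_upwards [ae_all_iff.2 hcomm, ae_all_iff.2 hV0] with ω hcomm hV0
  ext i
  exact (hcomm i).trans (hV0 i)

theorem condExp_bilin_ae_eq_zero {F G : Type*} [NormedAddCommGroup F] [NormedSpace ℝ F]
    [NormedAddCommGroup G] [NormedSpace ℝ G] [CompleteSpace G] (B : F →L[ℝ] E →L[ℝ] G)
    {f : Ω → F} {g : Ω → E} (hf : StronglyMeasurable[m] f) (hg : Integrable g μ)
    (hg0 : μ[g | m] =ᵐ[μ] 0) :
    μ[fun ω => B (f ω) (g ω) | m] =ᵐ[μ] 0 := by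
  by_cases hfg : Integrable (fun ω => B (f ω) (g ω)) μ
  · filter_upwards [condExp_bilin_of_stronglyMeasurable_left B hf hfg hg, hg0] with ω hB hg0
    rw [hB, hg0, Pi.zero_apply, map_zero, Pi.zero_apply]
  · rw [condExp_of_not_integrable hfg]

theorem condExp_le_mul_of_norm_le_mul [IsFiniteMeasure μ] (hm : m ≤ m0) {f w : Ω → ℝ} {c : ℝ}
    (hw : StronglyMeasurable[m] w) (hw_pos : ∀ ω, 0 < w ω) (hf : ∀ᵐ ω ∂μ, ‖f ω‖ ≤ c * w ω) :
    μ[f | m] ≤ᵐ[μ] fun ω => c * w ω := by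
  by_cases hfi : Integrable f μ
  · set r : Ω → ℝ := fun ω => f ω / w ω
    have hr_le : ∀ᵐ ω ∂μ, ‖r ω‖ ≤ c := by
      filter_upwards [hf] with ω hω
      rw [Real.norm_eq_abs, abs_div, abs_of_pos (hw_pos ω), div_le_iff₀ (hw_pos ω)]
      exact hω
    have hr : Integrable r μ :=
      .of_bound (hfi.1.div₀ (hw.mono hm).aestronglyMeasurable) c hr_le
    have hf_eq : f = w * r := funext fun ω => (mul_div_cancel₀ _ (hw_pos ω).ne').symm
    have hr_condExp : μ[r | m] ≤ᵐ[μ] fun _ => c := by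
      have := condExp_mono (m := m) hr (integrable_const c)
        (hr_le.mono fun ω hω => (le_abs_self _).trans hω)
      rwa [condExp_const hm] at this
    filter_upwards [condExp_mul_of_stronglyMeasurable_left hw (hf_eq ▸ hfi) hr, hr_condExp]
      with ω hpull hω
    rw [hf_eq, hpull, Pi.mul_apply, mul_comm c]
    exact mul_le_mul_of_nonneg_left hω (hw_pos ω).le
  · rw [condExp_of_not_integrable hfi]
    filter_upwards [hf] with ω hω
    exact (norm_nonneg _).trans hω

end CondExp

/-- The noise `u = (κᵀq) ∇F(w) - Hᵀ q` is a martingale difference: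
`E[u | 𝒢] = 0` and `E[‖u‖² | 𝒢] ≤ M (1 + ‖q‖²)` for a constant `M` depending only
on the bounds `G` on `‖∇F(w)‖`, `K` on `‖κ‖`, and `C` on the rows of `H`. -/
theorem stmt8 {d m : ℕ} {Ω : Type*} [m0 : MeasurableSpace Ω]
    (μ : Measure Ω) [IsProbabilityMeasure μ]
    (𝒢 : MeasurableSpace Ω) (h𝒢 : 𝒢 ≤ m0)
    (H : Ω → Fin m → EuclideanSpace ℝ (Fin d))
    (gFw : Ω → EuclideanSpace ℝ (Fin d))  -- ω ↦ ∇F(w_t(ω))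
    (q : Ω → EuclideanSpace ℝ (Fin m))
    (κ : EuclideanSpace ℝ (Fin m))
    (G K C : ℝ)
    (hG : ∀ᵐ ω ∂μ, ‖gFw ω‖ ≤ G) (hK : ‖κ‖ ≤ K)
    (hC : ∀ᵐ ω ∂μ, ∀ i, ‖H ω i‖ ≤ C)
    (hgFmeas : StronglyMeasurable[𝒢] gFw)
    (hqmeas : StronglyMeasurable[𝒢] q)
    (hHint : ∀ i, Integrable (fun ω => H ω i) μ)
    (hH : ∀ i, μ[fun ω => H ω i | 𝒢] =ᵐ[μ] fun ω => κ i • gFw ω)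
    (u : Ω → EuclideanSpace ℝ (Fin d))
    (hu : ∀ ω, u ω = ⟪κ, q ω⟫ • gFw ω - ∑ i, q ω i • H ω i) :
    (μ[u | 𝒢] =ᵐ[μ] fun _ => 0) ∧
      ∃ M : ℝ, 0 < M ∧
        μ[fun ω => ‖u ω‖ ^ 2 | 𝒢] ≤ᵐ[μ] fun ω => M * (1 + ‖q ω‖ ^ 2) := by
  set V : Ω → Fin m → EuclideanSpace ℝ (Fin d) := fun ω i => κ i • gFw ω - H ω i
  have hu_eq : u = fun ω => sumSmulCLM (Fin m) (EuclideanSpace ℝ (Fin d)) (q ω) (V ω) := by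
    funext ω
    rw [hu, sumSmulCLM_apply, inner_smul_sub_sum_smul]
  have hgF : Integrable gFw μ := .of_bound (hgFmeas.mono h𝒢).aestronglyMeasurable G hG
  have hV : ∀ i, Integrable (fun ω => V ω i) μ := fun i => (hgF.smul (κ i)).sub (hHint i)
  have hV_bound : ∀ᵐ ω ∂μ, ∀ i, ‖V ω i‖ ≤ K * G + C := by
    filter_upwards [hG, hC] with ω hωG hωC i
    refine (norm_sub_le _ _).trans (add_le_add ?_ (hωC i))
    rw [norm_smul]
    exact mul_le_mul ((PiLp.norm_apply_le κ i).trans hK) hωG (norm_nonneg _)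
      ((norm_nonneg κ).trans hK)
  refine ⟨?_, (m * (K * G + C)) ^ 2 + 1, by positivity, ?_⟩
  · rw [hu_eq]
    refine condExp_bilin_ae_eq_zero _ hqmeas (Integrable.of_eval hV) (condExp_pi_ae_eq_zero hV
      fun i => condExp_sub_ae_eq_zero_of_condExp_ae_eq h𝒢 (hHint i) (hgFmeas.const_smul (κ i))
        (hgF.smul (κ i)) (hH i))
  · refine condExp_le_mul_of_norm_le_mul h𝒢
      ((continuous_const.add (continuous_norm.pow 2)).comp_stronglyMeasurable hqmeas)
      (fun ω => by positivity) ?_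
    filter_upwards [hV_bound] with ω hω
    have hu_le : ‖u ω‖ ≤ m * (K * G + C) * ‖q ω‖ := by
      rw [hu_eq]
      simpa [mul_comm, mul_left_comm, mul_assoc] using norm_sum_smul_le (q ω) hω
    rw [norm_pow, norm_norm]
    nlinarith [pow_le_pow_left₀ (norm_nonneg _) hu_le 2, sq_nonneg (m * (K * G + C)),
      sq_nonneg ‖q ω‖]
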